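/- arXiv:1811.06102 — 3 statements merged into one kernel-verified Lean document; each statement's English description precedes it below -/
import Mathlib

section
/- Let Λ be a finitely generated free ℤ-module and let g : Λ → Λ be an automorphism satisfying g^N = id for some positive integer N. Let P : Λ → ℚ ⊗_ℤ Λ be the additive map P(x) = (1/N) ∑_{i=0}^{N-1} g^i(x). Then P vanishes on the image of (1 − g), and the induced map from the cokernel of (1 − g) : Λ → Λ to ℚ ⊗_ℤ Λ descends to an isomorphism of abelian groups (Λ / (1 − g)Λ) / Torsion ≅ P(Λ), where P(Λ) denotes the image of P. -/
open scoped TensorProduct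

/-- Let `Λ` be a finitely generated free `ℤ`-module, `g : Λ → Λ` an
automorphism with `g ^ N = 1` for a positive integer `N`, and let
`P : Λ → ℚ ⊗[ℤ] Λ`, `P x = (1/N) ∑_{i=0}^{N-1} g^i x` be the averaging operator.  Then `P`
vanishes on the image of `1 - g`, and `P` descends to an isomorphism of abelian groups
`(Λ / (1 - g)Λ) / Torsion ≅ P(Λ)`. -/
theorem coker_mod_torsion_iso_image_of_averaging
    (Λ : Type*) [AddCommGroup Λ] [Module ℤ Λ] [Module.Free ℤ Λ] [Module.Finite ℤ Λ]
    (N : ℕ) (hN : 0 < N)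
    (g : Λ →ₗ[ℤ] Λ) (hgunit : IsUnit g) (hg : g ^ N = 1)
    (P : Λ →ₗ[ℤ] ℚ ⊗[ℤ] Λ)
    (hP : ∀ x : Λ, P x = (N : ℚ)⁻¹ • ∑ i ∈ Finset.range N, (1 : ℚ) ⊗ₜ[ℤ] ((g ^ i) x)) :
    (∀ x : Λ, P ((1 - g) x) = 0) ∧
    ∃ e : ((Λ ⧸ LinearMap.range (1 - g)) ⧸
        Submodule.torsion ℤ (Λ ⧸ LinearMap.range (1 - g))) ≃+ LinearMap.range P,
      ∀ x : Λ,
        (e (Submodule.Quotient.mk (Submodule.Quotient.mk x)) : ℚ ⊗[ℤ] Λ) = P x := by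
  -- P vanishes on the image of 1 - g
  have h0 : ∀ x : Λ, P ((1 - g) x) = 0 := by
    intro x
    have hsub : (1 - g) x = x - g x := by
      simp [LinearMap.sub_apply]
    have hshift : ∀ i : ℕ, (g ^ i) (g x) = (g ^ (i + 1)) x := by
      intro i
      rw [pow_succ]
      rfl
    have hsum : (∑ i ∈ Finset.range N, (1 : ℚ) ⊗ₜ[ℤ] ((g ^ i) (g x)))
        = ∑ i ∈ Finset.range N, (1 : ℚ) ⊗ₜ[ℤ] ((g ^ i) x) := by
      have h1 : (∑ i ∈ Finset.range N, (1 : ℚ) ⊗ₜ[ℤ] ((g ^ (i + 1)) x))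
          = ∑ i ∈ Finset.range N, (1 : ℚ) ⊗ₜ[ℤ] ((g ^ i) x) := by
        have := Finset.sum_range_succ' (fun i => (1 : ℚ) ⊗ₜ[ℤ] ((g ^ i) x)) N
        have h2 := Finset.sum_range_succ (fun i => (1 : ℚ) ⊗ₜ[ℤ] ((g ^ i) x)) N
        have hN1 : (1 : ℚ) ⊗ₜ[ℤ] ((g ^ N) x) = (1 : ℚ) ⊗ₜ[ℤ] ((g ^ 0) x) := by
          rw [hg]; simp
        rw [h2, hN1] at this
        simp only [pow_zero, Module.End.one_apply] at this
        exact (add_right_cancel this).symm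
      calc (∑ i ∈ Finset.range N, (1 : ℚ) ⊗ₜ[ℤ] ((g ^ i) (g x)))
          = ∑ i ∈ Finset.range N, (1 : ℚ) ⊗ₜ[ℤ] ((g ^ (i + 1)) x) := by
            refine Finset.sum_congr rfl fun i _ => by rw [hshift]
        _ = _ := h1
    rw [hsub, map_sub, hP x, hP (g x), hsum, sub_self]
  refine ⟨h0, ?_⟩
  -- the induced map on the cokernel
  have hle : LinearMap.range (1 - g) ≤ LinearMap.ker P := by
    rintro _ ⟨x, rfl⟩
    exact h0 x
  set φ₀ := Submodule.liftQ (LinearMap.range (1 - g)) P hle with hφ₀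
  set ψ : (Λ ⧸ LinearMap.range (1 - g)) →+ ℚ ⊗[ℤ] Λ :=
    ⟨⟨φ₀, map_zero φ₀⟩, map_add φ₀⟩ with hψ
  set φ := ψ.toIntLinearMap with hφ
  have hφapp : ∀ x : Λ, φ (Submodule.Quotient.mk x) = P x := fun x => rfl
  -- injectivity of x ↦ 1 ⊗ x
  have hinj1 : Function.Injective (fun x : Λ => (1 : ℚ) ⊗ₜ[ℤ] x) := by
    have hL : Function.Injective (Algebra.linearMap ℤ ℚ) := fun a b hab => by
      have : ((a : ℚ)) = (b : ℚ) := hab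
      exact_mod_cast this
    have h2 := Module.Flat.rTensor_preserves_injective_linearMap (M := Λ)
      (Algebra.linearMap ℤ ℚ) hL
    have h3 : Function.Injective ((TensorProduct.lid ℤ Λ).symm) :=
      (TensorProduct.lid ℤ Λ).symm.injective
    have key : (fun x : Λ => (1 : ℚ) ⊗ₜ[ℤ] x)
        = (LinearMap.rTensor Λ (Algebra.linearMap ℤ ℚ)) ∘ (TensorProduct.lid ℤ Λ).symm := by
      funext x
      simp [TensorProduct.lid_symm_apply, LinearMap.rTensor_tmul]
    rw [key]
    exact h2.comp h3
  -- kernel of φ is the torsion submodule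
  have hker : LinearMap.ker φ
      = Submodule.torsion ℤ (Λ ⧸ LinearMap.range (1 - g)) := by
    apply le_antisymm
    · intro q hq
      obtain ⟨x, rfl⟩ := Submodule.Quotient.mk_surjective _ q
      have hPx : P x = 0 := by
        have := LinearMap.mem_ker.1 hq
        rwa [hφapp x] at this
      -- sum of g^i x is zero
      have hsum0 : (∑ i ∈ Finset.range N, (g ^ i) x) = 0 := by
        have h1 : (N : ℚ)⁻¹ • ∑ i ∈ Finset.range N, (1 : ℚ) ⊗ₜ[ℤ] ((g ^ i) x) = 0 := by
          rw [← hP x]; exact hPx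
        have hNne : (N : ℚ) ≠ 0 := Nat.cast_ne_zero.2 hN.ne'
        have h2 : (∑ i ∈ Finset.range N, (1 : ℚ) ⊗ₜ[ℤ] ((g ^ i) x)) = 0 := by
          have := congrArg (fun v => (N : ℚ) • v) h1
          simpa [smul_smul, mul_inv_cancel₀ hNne] using this
        have h3 : (1 : ℚ) ⊗ₜ[ℤ] (∑ i ∈ Finset.range N, (g ^ i) x) = 0 := by
          rw [TensorProduct.tmul_sum]; exact h2
        have h4 : (1 : ℚ) ⊗ₜ[ℤ] (0 : Λ) = (0 : ℚ ⊗[ℤ] Λ) := TensorProduct.tmul_zero _ _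
        exact hinj1 (h3.trans h4.symm)
      -- N • x lies in the range of 1 - g
      have hmem : (N : ℤ) • x ∈ LinearMap.range (1 - g) := by
        have heq : (N : ℤ) • x = ∑ i ∈ Finset.range N, ((1 - g ^ i) x) := by
          have : ∑ i ∈ Finset.range N, ((1 - g ^ i) x)
              = (N : ℤ) • x - ∑ i ∈ Finset.range N, (g ^ i) x := by
            simp only [LinearMap.sub_apply, Module.End.one_apply, Finset.sum_sub_distrib,
              Finset.sum_const, Finset.card_range]
            congr 1
            simp [← Nat.cast_smul_eq_nsmul ℤ]
          rw [this, hsum0, sub_zero]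
        rw [heq]
        apply Submodule.sum_mem
        intro i _
        have hfac : (1 : Λ →ₗ[ℤ] Λ) - g ^ i = (1 - g) * ∑ j ∈ Finset.range i, g ^ j := by
          rw [← neg_sub g 1, neg_mul, mul_geom_sum, neg_sub]
        rw [hfac]
        exact ⟨(∑ j ∈ Finset.range i, g ^ j) x, rfl⟩
      refine ⟨⟨(N : ℤ), mem_nonZeroDivisors_of_ne_zero (by exact_mod_cast hN.ne')⟩, ?_⟩
      have : ((N : ℤ) • Submodule.Quotient.mk x
          : Λ ⧸ LinearMap.range (1 - g)) = 0 := by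
        rw [← Submodule.Quotient.mk_smul, Submodule.Quotient.mk_eq_zero]
        exact hmem
      exact this
    · rintro q ⟨⟨a, ha⟩, hq⟩
      have haz : a ≠ 0 := nonZeroDivisors.ne_zero ha
      have h1 : a • φ q = 0 := by
        rw [← map_smul, show a • q = 0 from hq, map_zero]
      have h2 : (a : ℚ) • φ q = 0 := by
        rw [Int.cast_smul_eq_zsmul ℚ, ← int_smul_eq_zsmul (AddCommGroup.toIntModule _) a (φ q)]
        exact h1
      have : φ q = 0 := by
        have := congrArg (fun v => ((a : ℚ))⁻¹ • v) h2
        simpa [smul_smul, inv_mul_cancel₀ (show (a : ℚ) ≠ 0 by exact_mod_cast haz)] using this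
      exact this
  -- the induced injective map on the torsion-free quotient
  set φ' := Submodule.liftQ (Submodule.torsion ℤ (Λ ⧸ LinearMap.range (1 - g))) φ hker.ge
    with hφ'
  have hinj' : Function.Injective φ' :=
    LinearMap.ker_eq_bot.1 (Submodule.ker_liftQ_eq_bot _ _ _ hker.le)
  have hrange : LinearMap.range φ' = LinearMap.range P := by
    rw [hφ', Submodule.range_liftQ]
    apply le_antisymm
    · rintro _ ⟨q, rfl⟩
      obtain ⟨x, rfl⟩ := Submodule.Quotient.mk_surjective _ q
      exact ⟨x, (hφapp x).symm⟩
    · rintro _ ⟨x, rfl⟩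
      exact ⟨Submodule.Quotient.mk x, hφapp x⟩
  refine ⟨LinearEquiv.toAddEquiv (LinearEquiv.trans (LinearEquiv.ofInjective φ' hinj')
      (LinearEquiv.ofEq (LinearMap.range φ') (LinearMap.range P) hrange)), fun x => ?_⟩
  have h5 : φ' (Submodule.Quotient.mk (Submodule.Quotient.mk x)) = P x := by
    rw [hφ', Submodule.liftQ_apply]
    exact hφapp x
  simpa [LinearEquiv.trans_apply, LinearEquiv.coe_ofEq_apply,
    LinearEquiv.ofInjective_apply] using h5
end

section
/- Let Λ be a finitely generated free ℤ-module equipped with a symmetric bilinear form B : Λ × Λ → ℤ that is unimodular, i.e., the induced map Λ → Hom_ℤ(Λ, ℤ) is an isomorphism. Let g : Λ → Λ be an isometry of B with g^N = id for a positive integer N, let Λ^g = ker(1 − g) be the invariant submodule, and let P : Λ → ℚ ⊗_ℤ Λ be the averaging operator P(x) = (1/N) ∑_{i=0}^{N-1} g^i(x). Then the image P(Λ) is contained in Λ^g ⊗ ℚ and equals the dual lattice of Λ^g, that is, P(Λ) = { x ∈ Λ^g ⊗ ℚ : B_ℚ(x, y) ∈ ℤ for all y ∈ Λ^g }, where B_ℚ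 denotes the ℚ-bilinear extension of B. -/
/-!
The average `P x` lies in `Λ^g` (as `(1 - g) ∑ gⁱ = 1 - g^N = 0`) and satisfies
`B(P x, y) = B(x, y)` for `y ∈ Λ^g`, so `P(Λ)` lies in the dual of `Λ^g`. Conversely, `B` is
nondegenerate on `Λ^g`: if `v ∈ Λ^g` is orthogonal to `Λ^g`, then `N B(v, u) = B(v, ∑ gⁱ u) = 0`
for all `u`. Moreover `Λ^g = ker (1 - g)` is a direct summand of `Λ`, since `Λ / Λ^g ≅ (1 - g) Λ`
is free. So an integral functional on `Λ^g` extends to `Λ`, is `B(z, ·)` by unimodularity, and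
`P z` realises it; nondegeneracy makes this dual vector unique.
-/

open scoped TensorProduct
open Finset

namespace Module.End

variable {R M : Type*} [Ring R] [AddCommGroup M] [Module R M] {g : Module.End R M}

theorem pow_apply_of_mem_ker_one_sub {y : M} (hy : y ∈ LinearMap.ker (1 - g)) (i : ℕ) :
    (g ^ i) y = y := by
  have hgy : g y = y := (sub_eq_zero.mp (by simpa using hy)).symm
  induction i with
  | zero => rfl
  | succ i ih => rw [pow_succ, mul_apply, hgy, ih]

theorem geom_sum_apply_mem_ker_one_sub {N : ℕ} (hg : g ^ N = 1) (x : M) :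
    (∑ i ∈ range N, g ^ i) x ∈ LinearMap.ker (1 - g) := by
  have h : (1 - g) * ∑ i ∈ range N, g ^ i = 0 := by rw [mul_neg_geom_sum, hg, sub_self]
  rw [LinearMap.mem_ker, ← mul_apply, h, LinearMap.zero_apply]

end Module.End

section Isometry

open Module.End

variable {R M : Type*} [CommRing R] [AddCommGroup M] [Module R M]
  {B : M →ₗ[R] M →ₗ[R] R} {g : Module.End R M}

theorem apply_pow_apply_pow_of_isometry (hgB : ∀ x y, B (g x) (g y) = B x y) (i : ℕ) (x y : M) :
    B ((g ^ i) x) ((g ^ i) y) = B x y := by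
  induction i generalizing x y with
  | zero => rfl
  | succ i ih => rw [pow_succ, mul_apply, mul_apply, ih, hgB]

theorem apply_geom_sum_left_of_isometry (hgB : ∀ x y, B (g x) (g y) = B x y) {y : M}
    (hy : y ∈ LinearMap.ker (1 - g)) (N : ℕ) (x : M) :
    B ((∑ i ∈ range N, g ^ i) x) y = N • B x y := by
  have h (i : ℕ) : B ((g ^ i) x) y = B x y := by
    rw [← apply_pow_apply_pow_of_isometry hgB i x y, pow_apply_of_mem_ker_one_sub hy]
  simp only [LinearMap.sum_apply, map_sum, h, sum_const, card_range]

theorem apply_geom_sum_right_of_isometry (hgB : ∀ x y, B (g x) (g y) = B x y) {x : M}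
    (hx : x ∈ LinearMap.ker (1 - g)) (N : ℕ) (y : M) :
    B x ((∑ i ∈ range N, g ^ i) y) = N • B x y := by
  have h (i : ℕ) : B x ((g ^ i) y) = B x y := by
    rw [← apply_pow_apply_pow_of_isometry hgB i x y, pow_apply_of_mem_ker_one_sub hx]
  simp only [LinearMap.sum_apply, map_sum, h, sum_const, card_range]

theorem eq_zero_of_mem_ker_one_sub_of_isometry [IsAddTorsionFree R]
    (hgB : ∀ x y, B (g x) (g y) = B x y) (hB : Function.Injective B) {N : ℕ} (hg : g ^ N = 1)
    (hN : N ≠ 0) {v : M} (hv : v ∈ LinearMap.ker (1 - g))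
    (hvK : ∀ y ∈ LinearMap.ker (1 - g), B v y = 0) : v = 0 := by
  refine hB <| LinearMap.ext fun u => nsmul_right_injective hN ?_
  dsimp only
  rw [← apply_geom_sum_right_of_isometry hgB hv N u, hvK _ (geom_sum_apply_mem_ker_one_sub hg u),
    map_zero, LinearMap.zero_apply, smul_zero]

end Isometry

theorem eq_zero_of_mem_span_tmul_of_forall_apply_eq_zero {Λ : Type*} [AddCommGroup Λ] [Module ℤ Λ]
    {B : Λ →ₗ[ℤ] Λ →ₗ[ℤ] ℤ} {K : Submodule ℤ Λ} (hK : ∀ v ∈ K, (∀ y ∈ K, B v y = 0) → v = 0)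
    {Bq : (ℚ ⊗[ℤ] Λ) →ₗ[ℚ] Λ →ₗ[ℤ] ℚ} (hBq : ∀ v y, Bq ((1 : ℚ) ⊗ₜ[ℤ] v) y = B v y)
    {w : ℚ ⊗[ℤ] Λ} (hw : w ∈ Submodule.span ℚ ((fun y : Λ => (1 : ℚ) ⊗ₜ[ℤ] y) '' K))
    (hwK : ∀ y ∈ K, Bq w y = 0) : w = 0 := by
  -- `ℚ ⊗[ℤ] Λ` is the localization of `Λ` at `ℤ⁰`, so `w = v / s` with `v ∈ K`.
  obtain ⟨v, hv, s, rfl⟩ : w ∈ K.localized' ℚ (nonZeroDivisors ℤ) (TensorProduct.mk ℤ ℚ Λ 1) := by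
    rwa [Submodule.localized'_eq_span]
  have hBv : ∀ y ∈ K, B v y = 0 := fun y hy => by
    have h := congr(Bq $(IsLocalizedModule.mk'_cancel' (TensorProduct.mk ℤ ℚ Λ 1) v s) y)
    rw [Submonoid.smul_def, map_zsmul, LinearMap.smul_apply, hwK y hy, smul_zero,
      TensorProduct.mk_apply, hBq] at h
    exact_mod_cast h.symm
  rw [hK v hv hBv, IsLocalizedModule.mk'_zero]

theorem LinearMap.exists_intCast_eq {M : Type*} [AddCommGroup M] [Module ℤ M] (F : M →ₗ[ℤ] ℚ)
    (hF : ∀ u, ∃ n : ℤ, F u = n) : ∃ f : M →ₗ[ℤ] ℤ, ∀ u, (f u : ℚ) = F u := by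
  let e := LinearEquiv.ofInjective (Algebra.linearMap ℤ ℚ) Int.cast_injective
  refine ⟨e.symm.toLinearMap ∘ₗ F.codRestrict _ fun u => ?_, fun u => ?_⟩
  · obtain ⟨n, hn⟩ := hF u
    exact ⟨n, hn.symm⟩
  · exact congr($(e.apply_symm_apply (F.codRestrict _ _ u)).val)

section PID

variable {R M M' : Type*} [CommRing R] [IsDomain R] [IsPrincipalIdealRing R]
  [AddCommGroup M] [Module R M] [AddCommGroup M'] [Module R M'] [Module.Free R M']
  [Module.Finite R M']

theorem LinearMap.exists_isProj_ker (h : M →ₗ[R] M') :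
    ∃ π : Module.End R M, LinearMap.IsProj (LinearMap.ker h) π := by
  have : Module.Free R (M ⧸ LinearMap.ker h) := .of_equiv h.quotKerEquivRange.symm
  obtain ⟨s, hs⟩ := (LinearMap.ker h).mkQ.exists_rightInverse_of_surjective
    (LinearMap.ker h).range_mkQ
  refine ⟨LinearMap.id - s ∘ₗ (LinearMap.ker h).mkQ, fun u => ?_, fun y hy => ?_⟩
  · rw [← Submodule.Quotient.mk_eq_zero, ← Submodule.mkQ_apply]
    simpa [sub_eq_zero] using (LinearMap.congr_fun hs ((LinearMap.ker h).mkQ u)).symm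
  · simp [(Submodule.Quotient.mk_eq_zero _).mpr hy]

end PID

theorem image_of_averaging_eq_dual_of_invariant_lattice_general
    (Λ : Type*) [AddCommGroup Λ] [Module ℤ Λ] [Module.Free ℤ Λ] [Module.Finite ℤ Λ]
    (B : Λ →ₗ[ℤ] Λ →ₗ[ℤ] ℤ)
    (hBunimod : Function.Bijective B)
    (N : ℕ) (hN : 0 < N)
    (g : Λ →ₗ[ℤ] Λ) (hg : g ^ N = 1)
    (hgB : ∀ x y, B (g x) (g y) = B x y)
    (P : Λ →ₗ[ℤ] ℚ ⊗[ℤ] Λ)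
    (hP : ∀ x : Λ, P x = (N : ℚ)⁻¹ • ∑ i ∈ Finset.range N, (1 : ℚ) ⊗ₜ[ℤ] ((g ^ i) x))
    (Bq : (ℚ ⊗[ℤ] Λ) →ₗ[ℚ] Λ →ₗ[ℤ] ℚ)
    (hBq : ∀ (a : ℚ) (v y : Λ), Bq (a ⊗ₜ[ℤ] v) y = a * ((B v y : ℤ) : ℚ)) :
    (LinearMap.range P : Set (ℚ ⊗[ℤ] Λ)) ⊆
      (Submodule.span ℚ
        ((fun y : Λ => (1 : ℚ) ⊗ₜ[ℤ] y) '' (LinearMap.ker (1 - g) : Set Λ)) :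
          Set (ℚ ⊗[ℤ] Λ)) ∧
    (LinearMap.range P : Set (ℚ ⊗[ℤ] Λ)) =
      {x : ℚ ⊗[ℤ] Λ |
        x ∈ Submodule.span ℚ
          ((fun y : Λ => (1 : ℚ) ⊗ₜ[ℤ] y) '' (LinearMap.ker (1 - g) : Set Λ)) ∧
        ∀ y ∈ LinearMap.ker (1 - g), ∃ n : ℤ, Bq x y = (n : ℚ)} := by
  set K := LinearMap.ker (1 - g)
  set V := Submodule.span ℚ ((fun y : Λ => (1 : ℚ) ⊗ₜ[ℤ] y) '' (K : Set Λ))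
  have hPS (x : Λ) : P x = (N : ℚ)⁻¹ • (1 : ℚ) ⊗ₜ[ℤ] (∑ i ∈ range N, g ^ i) x := by
    rw [hP, LinearMap.sum_apply, TensorProduct.tmul_sum]
  have hPV (x : Λ) : P x ∈ V := hPS x ▸ V.smul_mem _
    (Submodule.subset_span ⟨_, Module.End.geom_sum_apply_mem_ker_one_sub hg x, rfl⟩)
  have hBq1 (v y : Λ) : Bq ((1 : ℚ) ⊗ₜ[ℤ] v) y = B v y := (hBq 1 v y).trans (one_mul _)
  have hBqP (x : Λ) {y : Λ} (hy : y ∈ K) : Bq (P x) y = B x y := by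
    rw [hPS, map_smul, LinearMap.smul_apply, hBq1, apply_geom_sum_left_of_isometry hgB hy,
      nsmul_eq_mul, Int.cast_mul, Int.cast_natCast, smul_eq_mul, inv_mul_cancel_left₀]
    exact_mod_cast hN.ne'
  have hV (w : ℚ ⊗[ℤ] Λ) (hw : w ∈ V) (hwK : ∀ y ∈ K, Bq w y = 0) : w = 0 := by
    have hK : ∀ v ∈ K, (∀ y ∈ K, B v y = 0) → v = 0 := fun _ hv =>
      eq_zero_of_mem_ker_one_sub_of_isometry hgB hBunimod.1 hg hN.ne' hv
    exact eq_zero_of_mem_span_tmul_of_forall_apply_eq_zero hK hBq1 hw hwK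
  refine ⟨?_, Set.ext fun w => ⟨?_, ?_⟩⟩
  · rintro _ ⟨x, rfl⟩
    exact hPV x
  · rintro ⟨x, rfl⟩
    exact ⟨hPV x, fun y hy => ⟨B x y, hBqP x hy⟩⟩
  · rintro ⟨hw, hwK⟩
    obtain ⟨π, hπ⟩ := (1 - g).exists_isProj_ker
    obtain ⟨f, hf⟩ := ((Bq w) ∘ₗ π).exists_intCast_eq fun u => hwK _ (hπ.map_mem u)
    obtain ⟨z, rfl⟩ := hBunimod.2 f
    refine ⟨z, sub_eq_zero.mp (hV _ (sub_mem (hPV z) hw) fun y hy => ?_)⟩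
    rw [map_sub, LinearMap.sub_apply, hBqP z hy, hf, LinearMap.comp_apply, hπ.map_id y hy, sub_self]

/-- Let `Λ` be a finitely generated free `ℤ`-module with a unimodular
symmetric bilinear form `B`, and let `g` be an isometry of `B` with `g ^ N = 1`.  Let
`Λ^g = ker (1 - g)` and let `P : Λ → ℚ ⊗[ℤ] Λ` be the averaging operator.  Then the image of
`P` is contained in `Λ^g ⊗ ℚ` and equals the dual lattice
`{x ∈ Λ^g ⊗ ℚ : B_ℚ(x, y) ∈ ℤ for all y ∈ Λ^g}`. -/
theorem image_of_averaging_eq_dual_of_invariant_lattice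
    (Λ : Type*) [AddCommGroup Λ] [Module ℤ Λ] [Module.Free ℤ Λ] [Module.Finite ℤ Λ]
    (B : Λ →ₗ[ℤ] Λ →ₗ[ℤ] ℤ)
    (hBsymm : ∀ x y, B x y = B y x)
    (hBunimod : Function.Bijective B)
    (N : ℕ) (hN : 0 < N)
    (g : Λ →ₗ[ℤ] Λ) (hgunit : IsUnit g) (hg : g ^ N = 1)
    (hgB : ∀ x y, B (g x) (g y) = B x y)
    (P : Λ →ₗ[ℤ] ℚ ⊗[ℤ] Λ)
    (hP : ∀ x : Λ, P x = (N : ℚ)⁻¹ • ∑ i ∈ Finset.range N, (1 : ℚ) ⊗ₜ[ℤ] ((g ^ i) x))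
    (Bq : (ℚ ⊗[ℤ] Λ) →ₗ[ℚ] Λ →ₗ[ℤ] ℚ)
    (hBq : ∀ (a : ℚ) (v y : Λ), Bq (a ⊗ₜ[ℤ] v) y = a * ((B v y : ℤ) : ℚ)) :
    (LinearMap.range P : Set (ℚ ⊗[ℤ] Λ)) ⊆
      (Submodule.span ℚ
        ((fun y : Λ => (1 : ℚ) ⊗ₜ[ℤ] y) '' (LinearMap.ker (1 - g) : Set Λ)) :
          Set (ℚ ⊗[ℤ] Λ)) ∧
    (LinearMap.range P : Set (ℚ ⊗[ℤ] Λ)) =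
      {x : ℚ ⊗[ℤ] Λ |
        x ∈ Submodule.span ℚ
          ((fun y : Λ => (1 : ℚ) ⊗ₜ[ℤ] y) '' (LinearMap.ker (1 - g) : Set Λ)) ∧
        ∀ y ∈ LinearMap.ker (1 - g), ∃ n : ℤ, Bq x y = (n : ℚ)} :=
  image_of_averaging_eq_dual_of_invariant_lattice_general Λ B hBunimod N hN g hg hgB P hP Bq hBq
end

section
/- For every positive integer n, the sum of all entries of the inverse of the Cartan matrix C of type A_n equals n(n+1)(n+2)/12; equivalently, setting v = (1/(n+1))·C^{-1}·𝟙 where 𝟙 is the all-ones column vector, one has (1/2)·vᵀ C v = n(n+2) / (24(n+1)). -/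
/-!
Extending a vector of length `n` by zeros at positions `0` and `n + 1`, the matrix `C` acts as
minus the discrete second difference. Hence `C⁻¹` is the discrete Green's function,
`C⁻¹ i j = min(i, j) (n + 1 - max(i, j)) / (n + 1)` (indices from `1`), and the solution of
`C x = 𝟙` is the discrete parabola `x_m = m (n + 1 - m) / 2`. The entry sum of `C⁻¹` is
`∑ x_m = n (n + 1) (n + 2) / 12`, and for `v = x / (n + 1)` the quadratic form is
`vᵀ C v = (∑ x_m) / (n + 1)²`.
-/

open Matrix

/-- The Cartan matrix of type `Aₙ`: the `n × n` rational matrix with `2` on the diagonal,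
`-1` on the entries adjacent to the diagonal, and `0` elsewhere. -/
def cartanMatrixA (n : ℕ) : Matrix (Fin n) (Fin n) ℚ :=
  Matrix.of fun i j =>
    if i = j then 2
    else if (i : ℕ) + 1 = (j : ℕ) ∨ (j : ℕ) + 1 = (i : ℕ) then -1 else 0

open Finset

theorem Fin.sum_univ_ite_val_eq {M : Type*} [AddCommMonoid M] (n m : ℕ) (c : M) :
    ∑ j : Fin n, (if (j : ℕ) = m then c else 0) = if m < n then c else 0 := by
  rw [Fin.sum_univ_eq_sum_range (fun j => if j = m then c else 0), sum_ite_eq']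
  simp only [mem_range]

theorem cartanMatrixA_mulVec_apply (n : ℕ) (f : ℕ → ℚ) (h0 : f 0 = 0) (hn : f (n + 1) = 0)
    (i : Fin n) :
    (cartanMatrixA n *ᵥ fun j => f (j + 1)) i = 2 * f (i + 1) - f i - f (i + 2) := by
  obtain ⟨i, hi⟩ := i
  have hterm : ∀ j : Fin n, cartanMatrixA n ⟨i, hi⟩ j * f (j + 1) =
      (if (j : ℕ) = i then 2 * f (i + 1) else 0) + (if (j : ℕ) = i + 1 then -f (i + 2) else 0) +
        (if (j : ℕ) = i - 1 then -f i else 0) := by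
    rintro ⟨j, hj⟩
    simp only [cartanMatrixA, of_apply, Fin.mk.injEq]
    split_ifs <;> first
      | omega
      | (rw [show i = 0 by omega, show j = 0 by omega, h0]; ring)
      | (rw [show j = i by omega]; ring)
      | (rw [show j = i + 1 by omega]; ring)
      | (rw [show j + 1 = i by omega]; ring)
      | ring
  simp only [mulVec, dotProduct, hterm, sum_add_distrib, Fin.sum_univ_ite_val_eq,
    if_pos hi, if_pos (show i - 1 < n by omega)]
  split_ifs with hi1
  · ring
  · rw [show i + 2 = n + 1 by omega, hn]; ring

/-- Column `k` of `(cartanMatrixA n)⁻¹` in `1`-based indexing, as a function of the row `m`. -/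
def cartanGreen (n k m : ℕ) : ℚ :=
  if m ≤ k then m * ((n : ℚ) + 1 - k) / (n + 1) else k * ((n : ℚ) + 1 - m) / (n + 1)

theorem cartanGreen_of_le (n : ℕ) {k m : ℕ} (h : m ≤ k) :
    cartanGreen n k m = m * ((n : ℚ) + 1 - k) / (n + 1) :=
  if_pos h

theorem cartanGreen_of_ge (n : ℕ) {k m : ℕ} (h : k ≤ m) :
    cartanGreen n k m = k * ((n : ℚ) + 1 - m) / (n + 1) := by
  unfold cartanGreen
  split_ifs with h'
  · rw [show m = k by omega]
  · rfl

theorem cartanGreen_left_boundary (n k : ℕ) : cartanGreen n k 0 = 0 := by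
  simp [cartanGreen_of_le n (Nat.zero_le k)]

theorem cartanGreen_right_boundary (n : ℕ) {k : ℕ} (hk : k ≤ n + 1) :
    cartanGreen n k (n + 1) = 0 := by
  rw [cartanGreen_of_ge n hk]; push_cast; ring

theorem cartanGreen_second_diff (n k i : ℕ) :
    2 * cartanGreen n k (i + 1) - cartanGreen n k i - cartanGreen n k (i + 2) =
      if i + 1 = k then 1 else 0 := by
  rcases lt_trichotomy (i + 1) k with h | rfl | h
  · rw [cartanGreen_of_le n h.le, cartanGreen_of_le n (by omega), cartanGreen_of_le n h,
      if_neg h.ne]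
    push_cast; ring
  · rw [cartanGreen_of_le n le_rfl, cartanGreen_of_le n (by omega),
      cartanGreen_of_ge n (by omega), if_pos rfl]
    field_simp; push_cast; ring
  · rw [cartanGreen_of_ge n h.le, cartanGreen_of_ge n (by omega), cartanGreen_of_ge n (by omega),
      if_neg h.ne']
    push_cast; ring

def cartanGreenMatrix (n : ℕ) : Matrix (Fin n) (Fin n) ℚ :=
  Matrix.of fun i j => cartanGreen n (j + 1) (i + 1)

theorem cartanMatrixA_mul_cartanGreenMatrix (n : ℕ) :
    cartanMatrixA n * cartanGreenMatrix n = 1 := by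
  ext i k
  change (cartanMatrixA n *ᵥ fun j : Fin n => cartanGreen n (k + 1) (j + 1)) i = _
  rw [cartanMatrixA_mulVec_apply n _ (cartanGreen_left_boundary n _)
    (cartanGreen_right_boundary n (by omega)), cartanGreen_second_diff, one_apply]
  simp only [Nat.add_right_cancel_iff, Fin.val_inj]

theorem cartanMatrixA_inv (n : ℕ) : (cartanMatrixA n)⁻¹ = cartanGreenMatrix n :=
  inv_eq_right_inv (cartanMatrixA_mul_cartanGreenMatrix n)

theorem cartanMatrixA_mulVec_parabola (n : ℕ) :
    cartanMatrixA n *ᵥ (fun i : Fin n => ((i : ℚ) + 1) * (n - i) / 2) = 1 := by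
  let f : ℕ → ℚ := fun m => m * (n + 1 - m) / 2
  have hf : (fun i : Fin n => ((i : ℚ) + 1) * (n - i) / 2) = fun i : Fin n => f (i + 1) := by
    funext i; push_cast [f]; ring
  funext i
  rw [hf, cartanMatrixA_mulVec_apply n f (by simp [f]) (by simp [f]), Pi.one_apply]
  push_cast [f]; ring

theorem cartanMatrixA_inv_mulVec_one (n : ℕ) :
    (cartanMatrixA n)⁻¹ *ᵥ 1 = fun i : Fin n => ((i : ℚ) + 1) * (n - i) / 2 := by
  rw [← cartanMatrixA_mulVec_parabola n, mulVec_mulVec, cartanMatrixA_inv,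
    mul_eq_one_comm.mp (cartanMatrixA_mul_cartanGreenMatrix n), one_mulVec]

theorem sum_range_succ_mul_sub (N : ℚ) (k : ℕ) :
    ∑ i ∈ range k, ((i : ℚ) + 1) * (N - i) = k * (k + 1) * (3 * N - 2 * k + 2) / 6 := by
  induction k with
  | zero => simp
  | succ k ih => rw [sum_range_succ, ih]; push_cast; ring

theorem sum_cartanMatrixA_inv_mulVec_one (n : ℕ) :
    ∑ i, ((cartanMatrixA n)⁻¹ *ᵥ 1) i = (n : ℚ) * (n + 1) * (n + 2) / 12 := by
  rw [cartanMatrixA_inv_mulVec_one, ← sum_div,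
    Fin.sum_univ_eq_sum_range (fun i => ((i : ℚ) + 1) * (n - i)), sum_range_succ_mul_sub]
  ring

theorem cartanMatrixA_inv_entry_sum_general (n : ℕ) :
    (∑ i, ∑ j, (cartanMatrixA n)⁻¹ i j) = (n : ℚ) * (n + 1) * (n + 2) / 12 ∧
    ∀ v : Fin n → ℚ,
      v = ((n : ℚ) + 1)⁻¹ • (cartanMatrixA n)⁻¹.mulVec 1 →
      (1 / 2 : ℚ) * (v ⬝ᵥ (cartanMatrixA n).mulVec v) =
        (n : ℚ) * (n + 2) / (24 * ((n : ℚ) + 1)) := by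
  have hsum : ∑ i, ∑ j, (cartanMatrixA n)⁻¹ i j = ∑ i, ((cartanMatrixA n)⁻¹ *ᵥ 1) i := by
    simp [mulVec, dotProduct]
  refine ⟨hsum ▸ sum_cartanMatrixA_inv_mulVec_one n, fun v hv => ?_⟩
  have hv' : cartanMatrixA n *ᵥ v = ((n : ℚ) + 1)⁻¹ • 1 := by
    rw [hv, mulVec_smul, cartanMatrixA_inv_mulVec_one, cartanMatrixA_mulVec_parabola]
  rw [hv', dotProduct_smul, hv, smul_dotProduct, dotProduct_one, sum_cartanMatrixA_inv_mulVec_one]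
  have hN : (n : ℚ) + 1 ≠ 0 := by positivity
  simp only [smul_eq_mul]
  field_simp
  ring

/-- For every positive `n`, the sum of all entries of the inverse of the
Cartan matrix `C` of type `Aₙ` equals `n(n+1)(n+2)/12`; equivalently, for
`v = (1/(n+1)) C⁻¹ 𝟙` one has `(1/2) vᵀ C v = n(n+2)/(24(n+1))`. -/
theorem cartanMatrixA_inv_entry_sum (n : ℕ) (hn : 0 < n) :
    (∑ i, ∑ j, (cartanMatrixA n)⁻¹ i j) = (n : ℚ) * (n + 1) * (n + 2) / 12 ∧
    ∀ v : Fin n → ℚ,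
      v = ((n : ℚ) + 1)⁻¹ • (cartanMatrixA n)⁻¹.mulVec 1 →
      (1 / 2 : ℚ) * (v ⬝ᵥ (cartanMatrixA n).mulVec v) =
        (n : ℚ) * (n + 2) / (24 * ((n : ℚ) + 1)) :=
  cartanMatrixA_inv_entry_sum_general n
end
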